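/- Let a = 3π/4. For ρ ∈ (0,1), λ > 0, t_0 > 0 define f_{2+}(ρ) = (e^{ia} e^{2iaρ}/(2πi ρ λ² t_0^{ρ+1})) ∫_1^∞ e^{(i-1) s^{1/ρ}/√2} s^{1/ρ + 1} (s e^{iaρ} + λ t_0^ρ)^{-1} ds and f_{2-}(ρ) = (e^{-ia} e^{-2iaρ}/(2πi ρ λ² t_0^{ρ+1})) ∫_1^∞ e^{(-i-1) s^{1/ρ}/√2} s^{1/ρ + 1} (s e^{-iaρ} + λ t_0^ρ)^{-1} ds. Then for every ρ_0 ∈ (0,1) and λ_1 > 0 there exist constants C > 0 and T_0 > 1 depending only on ρ_0 and λ_1 such that for all t_0 ≥ T_0, all λ ≥ λ_1, and all ρ ∈ [ρ_0, 1), f_{2±} are differentiable at ρ and |f_{2±}'(ρ)| ≤ C (1/ρ + ln t_0) / (λ³ t_0^{2ρ+1}). -/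

import Mathlib

open MeasureTheory Complex

/-- The contribution of the ray `arg ζ = 3πρ/4`, `|ζ| ≥ 1`, of the Hankel contour
`δ(1; 3πρ/4)` in the integral representation of `t₀^{ρ-1} E_{ρ,ρ}(-λ t₀^ρ)`, `a = 3π/4`:
`f₂₊(ρ) = (e^{ia} e^{2iaρ}/(2πi ρ λ² t₀^{ρ+1})) ∫_1^∞ e^{(i-1)s^{1/ρ}/√2} s^{1/ρ+1}
(s e^{iaρ} + λ t₀^ρ)⁻¹ ds`. -/
noncomputable def f2plus (lam t₀ ρ : ℝ) : ℂ :=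
  Complex.exp (Complex.I * ((3 * Real.pi / 4 : ℝ) : ℂ)) *
      Complex.exp (2 * Complex.I * ((3 * Real.pi / 4 : ℝ) : ℂ) * (ρ : ℂ)) /
      (2 * ((Real.pi : ℝ) : ℂ) * Complex.I * (ρ : ℂ) * ((lam ^ 2 * t₀ ^ (ρ + 1) : ℝ) : ℂ)) *
    ∫ s in Set.Ioi (1 : ℝ),
      Complex.exp ((Complex.I - 1) * ((s ^ (1 / ρ) : ℝ) : ℂ) / ((Real.sqrt 2 : ℝ) : ℂ)) *
        ((s ^ (1 / ρ + 1) : ℝ) : ℂ) /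
        ((s : ℂ) * Complex.exp (Complex.I * ((3 * Real.pi / 4 : ℝ) : ℂ) * (ρ : ℂ)) +
          ((lam * t₀ ^ ρ : ℝ) : ℂ))

/-- The contribution of the ray `arg ζ = -3πρ/4`, `|ζ| ≥ 1`, of the Hankel contour:
`f₂₋(ρ) = (e^{-ia} e^{-2iaρ}/(2πi ρ λ² t₀^{ρ+1})) ∫_1^∞ e^{(-i-1)s^{1/ρ}/√2} s^{1/ρ+1}
(s e^{-iaρ} + λ t₀^ρ)⁻¹ ds`. -/
noncomputable def f2minus (lam t₀ ρ : ℝ) : ℂ :=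
  Complex.exp (-(Complex.I * ((3 * Real.pi / 4 : ℝ) : ℂ))) *
      Complex.exp (-(2 * Complex.I * ((3 * Real.pi / 4 : ℝ) : ℂ) * (ρ : ℂ))) /
      (2 * ((Real.pi : ℝ) : ℂ) * Complex.I * (ρ : ℂ) * ((lam ^ 2 * t₀ ^ (ρ + 1) : ℝ) : ℂ)) *
    ∫ s in Set.Ioi (1 : ℝ),
      Complex.exp ((-Complex.I - 1) * ((s ^ (1 / ρ) : ℝ) : ℂ) / ((Real.sqrt 2 : ℝ) : ℂ)) *
        ((s ^ (1 / ρ + 1) : ℝ) : ℂ) /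
        ((s : ℂ) * Complex.exp (-(Complex.I * ((3 * Real.pi / 4 : ℝ) : ℂ) * (ρ : ℂ))) +
          ((lam * t₀ ^ ρ : ℝ) : ℂ))

/-!
With `θ = ±3π/4` one has `e^{iθ} = (±i - 1)/√2`, so `f₂± = P(ρ) J(ρ)` with
`J(ρ) = ∫_1^∞ exp(e^{iθ} s^{1/ρ}) s^{1/ρ+1} / D ds` and `D = s e^{iθρ} + λ t₀^ρ`.
Since `cos(θρ) ≥ cos(3π/4)` for `ρ ∈ [0, 1]`, `|D|` is at least `s/2` and `λ t₀^ρ / 2`; hence the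
integrand is `O(s^p e^{-s/2} / (λ t₀^ρ))` for every `p ≥ 1/ρ + 1` and its logarithmic
`ρ`-derivative is `O((1 + ln t₀) s^p / ρ²)`, uniformly near `ρ`. Dominated convergence then
differentiates under the integral, and `∫_1^∞ s^q e^{-s/2} ds ≤ 2^{q+1} Γ(q+1)`. With
`|P| = 1/(2πρλ²t₀^{ρ+1})` and `|P'/P| ≤ 3π/2 + 1/ρ + ln t₀`, both terms of `(PJ)' = P'J + PJ'`
are `O((1/ρ + ln t₀) / (λ³ t₀^{2ρ+1}))`.
-/

open Set Real

section LogDeriv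

variable {𝕜 𝕜' : Type*} [NontriviallyNormedField 𝕜] [NontriviallyNormedField 𝕜']
  [NormedAlgebra 𝕜 𝕜'] {f g : 𝕜 → 𝕜'} {a b : 𝕜'} {x : 𝕜}

theorem HasDerivAt.mul_of_logDeriv (hf : HasDerivAt f (f x * a) x)
    (hg : HasDerivAt g (g x * b) x) :
    HasDerivAt (fun y => f y * g y) (f x * g x * (a + b)) x :=
  (hf.mul hg).congr_deriv (by ring)

theorem HasDerivAt.div_of_logDeriv (hf : HasDerivAt f (f x * a) x)
    (hg : HasDerivAt g (g x * b) x) (hgx : g x ≠ 0) :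
    HasDerivAt (fun y => f y / g y) (f x / g x * (a - b)) x :=
  (hf.div hg hgx).congr_deriv (by field_simp)

end LogDeriv

namespace HankelRay

noncomputable def prefactor (θ lam t₀ ρ : ℝ) : ℂ :=
  cexp (I * θ) * cexp (2 * I * θ * ρ) / (2 * π * I * ρ * ((lam ^ 2 * t₀ ^ (ρ + 1) : ℝ) : ℂ))

noncomputable def denom (θ lam t₀ ρ s : ℝ) : ℂ :=
  s * cexp (I * θ * ρ) + ((lam * t₀ ^ ρ : ℝ) : ℂ)

noncomputable def integrand (θ lam t₀ ρ s : ℝ) : ℂ :=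
  cexp (cexp (I * θ) * ((s ^ (1 / ρ) : ℝ) : ℂ)) * ((s ^ (1 / ρ + 1) : ℝ) : ℂ) / denom θ lam t₀ ρ s

noncomputable def rayContribution (θ lam t₀ ρ : ℝ) : ℂ :=
  prefactor θ lam t₀ ρ * ∫ s in Ioi (1 : ℝ), integrand θ lam t₀ ρ s

lemma cexp_I_mul_three_pi_div_four :
    cexp (I * ((3 * π / 4 : ℝ) : ℂ)) = (I - 1) / ((√2 : ℝ) : ℂ) := by
  have hcos : Real.cos (3 * π / 4) = -(√2 / 2) := by
    rw [show 3 * π / 4 = π - π / 4 by ring, Real.cos_pi_sub, Real.cos_pi_div_four]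
  have hsin : Real.sin (3 * π / 4) = √2 / 2 := by
    rw [show 3 * π / 4 = π - π / 4 by ring, Real.sin_pi_sub, Real.sin_pi_div_four]
  have h2 : ((√2 : ℝ) : ℂ) ^ 2 = 2 := by norm_cast; simp
  rw [mul_comm, Complex.exp_mul_I, ← Complex.ofReal_cos, ← Complex.ofReal_sin, hcos, hsin]
  field_simp
  push_cast
  linear_combination (I / 2 - 1 / 2) * h2

lemma f2plus_eq_rayContribution (lam t₀ : ℝ) :
    f2plus lam t₀ = rayContribution (3 * π / 4) lam t₀ := by
  funext ρ
  simp only [f2plus, rayContribution, prefactor, integrand, denom,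
    mul_div_right_comm (I - 1), cexp_I_mul_three_pi_div_four]

lemma cexp_neg_I_mul_three_pi_div_four :
    cexp (-(I * ((3 * π / 4 : ℝ) : ℂ))) = (-I - 1) / ((√2 : ℝ) : ℂ) := by
  have h2 : ((√2 : ℝ) : ℂ) ^ 2 = 2 := by norm_cast; simp
  have h0 : ((√2 : ℝ) : ℂ) ≠ 0 := by norm_cast; positivity
  have hI : I - 1 ≠ 0 := by
    intro h
    simpa using congrArg Complex.re h
  rw [Complex.exp_neg, cexp_I_mul_three_pi_div_four, inv_div, div_eq_div_iff hI h0]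
  linear_combination h2 + Complex.I_sq

lemma f2minus_eq_rayContribution (lam t₀ : ℝ) :
    f2minus lam t₀ = rayContribution (-(3 * π / 4)) lam t₀ := by
  funext ρ
  simp only [f2minus, rayContribution, prefactor, integrand, denom, Complex.ofReal_neg, mul_neg,
    neg_mul, mul_div_right_comm (-I - 1), cexp_neg_I_mul_three_pi_div_four]

noncomputable def integrandLogDeriv (θ lam t₀ ρ s : ℝ) : ℂ :=
  -(cexp (I * θ) * ((s ^ (1 / ρ) * Real.log s / ρ ^ 2 : ℝ) : ℂ)) - ((Real.log s / ρ ^ 2 : ℝ) : ℂ) -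
    (s * cexp (I * θ * ρ) * (I * θ) + ((lam * t₀ ^ ρ * Real.log t₀ : ℝ) : ℂ)) / denom θ lam t₀ ρ s

lemma hasDerivAt_prefactor (θ : ℝ) {lam t₀ ρ : ℝ} (hlam : lam ≠ 0) (ht : 0 < t₀) (hρ : ρ ≠ 0) :
    HasDerivAt (prefactor θ lam t₀)
      (prefactor θ lam t₀ ρ * (2 * I * θ - (1 / ρ + Real.log t₀))) ρ := by
  have hofReal : HasDerivAt (fun x : ℝ => (x : ℂ)) 1 ρ := (hasDerivAt_id ρ).ofReal_comp
  have hnum : HasDerivAt (fun x : ℝ => cexp (I * θ) * cexp (2 * I * θ * x))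
      (cexp (I * θ) * cexp (2 * I * θ * ρ) * (2 * I * θ)) ρ :=
    ((hofReal.const_mul (2 * I * θ)).cexp.const_mul (cexp (I * θ))).congr_deriv (by ring)
  have hden : HasDerivAt (fun x : ℝ => 2 * π * I * x * ((lam ^ 2 * t₀ ^ (x + 1) : ℝ) : ℂ))
      (2 * π * I * ρ * ((lam ^ 2 * t₀ ^ (ρ + 1) : ℝ) : ℂ) * (1 / ρ + Real.log t₀)) ρ := by
    refine ((hofReal.const_mul (2 * π * I)).mul
      ((((Real.hasStrictDerivAt_const_rpow ht (ρ + 1)).hasDerivAt.comp_add_const ρ 1).const_mul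
        (lam ^ 2)).ofReal_comp)).congr_deriv ?_
    have hρc : (ρ : ℂ) ≠ 0 := by exact_mod_cast hρ
    field_simp
    push_cast
    ring
  have hden0 : 2 * π * I * ρ * ((lam ^ 2 * t₀ ^ (ρ + 1) : ℝ) : ℂ) ≠ 0 := by
    simp [Real.pi_ne_zero, hρ, hlam, (Real.rpow_pos_of_pos ht _).ne']
  exact hnum.div_of_logDeriv hden hden0

lemma hasDerivAt_integrand (θ : ℝ) {lam t₀ ρ s : ℝ} (ht : 0 < t₀) (hρ : ρ ≠ 0) (hs : 0 < s)
    (hden : denom θ lam t₀ ρ s ≠ 0) :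
    HasDerivAt (fun x => integrand θ lam t₀ x s)
      (integrand θ lam t₀ ρ s * integrandLogDeriv θ lam t₀ ρ s) ρ := by
  have hinv : HasDerivAt (fun x : ℝ => 1 / x) (-(1 / ρ ^ 2)) ρ := by
    simpa only [one_div] using hasDerivAt_inv hρ
  have hexp : HasDerivAt (fun x : ℝ => cexp (cexp (I * θ) * ((s ^ (1 / x) : ℝ) : ℂ)))
      (cexp (cexp (I * θ) * ((s ^ (1 / ρ) : ℝ) : ℂ)) *
        (-(cexp (I * θ) * ((s ^ (1 / ρ) * Real.log s / ρ ^ 2 : ℝ) : ℂ)))) ρ := by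
    refine ((((hasDerivAt_const ρ s).rpow hinv hs).ofReal_comp.const_mul _).cexp).congr_deriv ?_
    push_cast
    ring
  have hpow : HasDerivAt (fun x : ℝ => ((s ^ (1 / x + 1) : ℝ) : ℂ))
      (((s ^ (1 / ρ + 1) : ℝ) : ℂ) * (-((Real.log s / ρ ^ 2 : ℝ) : ℂ))) ρ := by
    refine ((hasDerivAt_const ρ s).rpow (hinv.add_const 1) hs).ofReal_comp.congr_deriv ?_
    push_cast
    ring
  have hdenom : HasDerivAt (fun x => denom θ lam t₀ x s) (denom θ lam t₀ ρ s *
      ((s * cexp (I * θ * ρ) * (I * θ) + ((lam * t₀ ^ ρ * Real.log t₀ : ℝ) : ℂ)) /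
        denom θ lam t₀ ρ s)) ρ := by
    rw [mul_div_cancel₀ _ hden]
    have hofReal : HasDerivAt (fun x : ℝ => (x : ℂ)) 1 ρ := (hasDerivAt_id ρ).ofReal_comp
    refine (((hofReal.const_mul (I * θ)).cexp.const_mul (s : ℂ)).add
      ((Real.hasStrictDerivAt_const_rpow ht ρ).hasDerivAt.const_mul lam).ofReal_comp).congr_deriv ?_
    push_cast
    ring
  refine ((hexp.mul_of_logDeriv hpow).div_of_logDeriv hdenom hden).congr_deriv ?_
  simp only [integrandLogDeriv, integrand]
  ring

lemma cos_eq_of_abs_eq_three_pi_div_four {θ : ℝ} (hθ : |θ| = 3 * π / 4) :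
    Real.cos θ = -(√2 / 2) := by
  rw [← Real.cos_abs, hθ, show 3 * π / 4 = π - π / 4 by ring, Real.cos_pi_sub,
    Real.cos_pi_div_four]

lemma cos_mul_ge_of_abs_eq_three_pi_div_four {θ ρ : ℝ} (hθ : |θ| = 3 * π / 4) (h0 : 0 ≤ ρ)
    (h1 : ρ ≤ 1) : -(√2 / 2) ≤ Real.cos (θ * ρ) := by
  rw [← cos_eq_of_abs_eq_three_pi_div_four hθ, ← Real.cos_abs θ, ← Real.cos_abs (θ * ρ), abs_mul,
    abs_of_nonneg h0]
  have := Real.pi_pos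
  exact Real.cos_le_cos_of_nonneg_of_le_pi (by positivity) (by rw [hθ]; linarith)
    (mul_le_of_le_one_right (abs_nonneg θ) h1)

lemma norm_ofReal_mul_cexp_add_ofReal_ge {s r φ : ℝ} (hs : 0 ≤ s) (hr : 0 ≤ r)
    (hφ : -(√2 / 2) ≤ Real.cos φ) :
    s / 2 ≤ ‖(s : ℂ) * cexp (φ * I) + r‖ ∧ r / 2 ≤ ‖(s : ℂ) * cexp (φ * I) + r‖ := by
  have hsq : ‖(s : ℂ) * cexp (φ * I) + r‖ ^ 2 = s ^ 2 + r ^ 2 + 2 * s * r * Real.cos φ := by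
    rw [Complex.sq_norm, Complex.normSq_apply]
    simp only [Complex.add_re, Complex.mul_re, Complex.ofReal_re, Complex.exp_ofReal_mul_I_re,
      Complex.ofReal_im, Complex.exp_ofReal_mul_I_im, zero_mul, sub_zero, Complex.add_im,
      Complex.mul_im, add_zero]
    linear_combination s ^ 2 * Real.sin_sq_add_cos_sq φ
  have hsqrt2 : √2 ≤ 3 / 2 := by
    rw [Real.sqrt_le_left (by norm_num)]
    norm_num
  have hlow : (s ^ 2 + r ^ 2) / 4 ≤ ‖(s : ℂ) * cexp (φ * I) + r‖ ^ 2 := by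
    rw [hsq]
    nlinarith [mul_nonneg hs hr, sq_nonneg (s - r)]
  constructor <;> nlinarith [norm_nonneg ((s : ℂ) * cexp (φ * I) + r)]

lemma norm_denom_ge {θ lam t₀ ρ s : ℝ} (hθ : |θ| = 3 * π / 4) (hρ0 : 0 ≤ ρ) (hρ1 : ρ ≤ 1)
    (hs : 0 ≤ s) (hr : 0 ≤ lam * t₀ ^ ρ) :
    s / 2 ≤ ‖denom θ lam t₀ ρ s‖ ∧ lam * t₀ ^ ρ / 2 ≤ ‖denom θ lam t₀ ρ s‖ := by
  have harg : I * θ * ρ = ((θ * ρ : ℝ) : ℂ) * I := by push_cast; ring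
  rw [denom, harg]
  exact norm_ofReal_mul_cexp_add_ofReal_ge hs hr
    (cos_mul_ge_of_abs_eq_three_pi_div_four hθ hρ0 hρ1)

noncomputable def weight (p s : ℝ) : ℝ := s ^ p * rexp (-(s / 2))

lemma weight_nonneg (p : ℝ) {s : ℝ} (hs : 0 ≤ s) : 0 ≤ weight p s :=
  mul_nonneg (Real.rpow_nonneg hs p) (Real.exp_pos _).le

lemma norm_integrand_le {θ lam t₀ ρ s p : ℝ} (hθ : |θ| = 3 * π / 4) (hρ0 : 0 < ρ) (hρ1 : ρ ≤ 1)
    (hp : 1 / ρ + 1 ≤ p) (hs : 1 ≤ s) (hr : 0 < lam * t₀ ^ ρ) :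
    ‖integrand θ lam t₀ ρ s‖ ≤ 2 / (lam * t₀ ^ ρ) * weight p s := by
  have hs0 : 0 < s := by linarith
  have hρinv : 1 ≤ 1 / ρ := by rw [le_div_iff₀ hρ0]; linarith
  have hexp : ‖cexp (cexp (I * θ) * ((s ^ (1 / ρ) : ℝ) : ℂ))‖ ≤ rexp (-(s / 2)) := by
    have hre : (cexp (I * θ) * ((s ^ (1 / ρ) : ℝ) : ℂ)).re = Real.cos θ * s ^ (1 / ρ) := by
      simp [Complex.exp_re]
    rw [Complex.norm_exp, hre, cos_eq_of_abs_eq_three_pi_div_four hθ]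
    have hsu : s ≤ s ^ (1 / ρ) := Real.self_le_rpow_of_one_le hs hρinv
    have hsqrt2 : 1 ≤ √2 := by rw [Real.le_sqrt] <;> norm_num
    rw [Real.exp_le_exp]
    nlinarith
  have hpow : ‖((s ^ (1 / ρ + 1) : ℝ) : ℂ)‖ ≤ s ^ p := by
    rw [Complex.norm_real, Real.norm_of_nonneg (by positivity)]
    exact Real.rpow_le_rpow_of_exponent_le hs hp
  have hden := (norm_denom_ge hθ hρ0.le hρ1 hs0.le hr.le).2
  rw [integrand, norm_div, norm_mul, weight]
  calc _ ≤ rexp (-(s / 2)) * s ^ p / (lam * t₀ ^ ρ / 2) := by gcongr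
    _ = _ := by field_simp

lemma norm_denom_deriv_div_denom_le {θ lam t₀ ρ s : ℝ} (hθ : |θ| = 3 * π / 4) (hρ0 : 0 ≤ ρ)
    (hρ1 : ρ ≤ 1) (hs : 0 < s) (hlam : 0 < lam) (ht : 1 ≤ t₀) :
    ‖(s * cexp (I * θ * ρ) * (I * θ) + ((lam * t₀ ^ ρ * Real.log t₀ : ℝ) : ℂ)) /
        denom θ lam t₀ ρ s‖ ≤ 3 * π / 2 + 2 * Real.log t₀ := by
  have hL : 0 ≤ Real.log t₀ := Real.log_nonneg ht
  have hr : 0 < lam * t₀ ^ ρ := by positivity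
  obtain ⟨hds, hdr⟩ := norm_denom_ge hθ hρ0 hρ1 hs.le hr.le
  have hnorm1 : ‖(s : ℂ) * cexp (I * θ * ρ) * (I * θ)‖ = 3 * π / 4 * s := by
    rw [norm_mul, norm_mul, show I * θ * ρ = ((θ * ρ : ℝ) : ℂ) * I by push_cast; ring,
      Complex.norm_exp_ofReal_mul_I, norm_mul, Complex.norm_I, Complex.norm_real,
      Complex.norm_real, Real.norm_eq_abs, Real.norm_eq_abs, abs_of_pos hs, hθ]
    ring
  have hnorm2 : ‖((lam * t₀ ^ ρ * Real.log t₀ : ℝ) : ℂ)‖ = lam * t₀ ^ ρ * Real.log t₀ := by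
    rw [Complex.norm_real, Real.norm_of_nonneg (by positivity)]
  rw [norm_div, div_le_iff₀ (by linarith)]
  calc _ ≤ _ := norm_add_le _ _
    _ = 3 * π / 4 * s + lam * t₀ ^ ρ * Real.log t₀ := by rw [hnorm1, hnorm2]
    _ ≤ _ := by nlinarith [Real.pi_pos]

lemma norm_integrandLogDeriv_le {θ lam t₀ ρ s p : ℝ} (hθ : |θ| = 3 * π / 4) (hρ0 : 0 < ρ)
    (hρ1 : ρ ≤ 1) (hp : 1 / ρ + 1 ≤ p) (hs : 1 ≤ s) (hlam : 0 < lam) (ht : 1 ≤ t₀) :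
    ‖integrandLogDeriv θ lam t₀ ρ s‖ ≤ 2 / ρ ^ 2 * (1 + π + Real.log t₀) * s ^ p := by
  have hs0 : 0 < s := by linarith
  have hls : 0 ≤ Real.log s := Real.log_nonneg hs
  have hL : 0 ≤ Real.log t₀ := Real.log_nonneg ht
  have hρinv : 1 ≤ 1 / ρ := by rw [le_div_iff₀ hρ0]; linarith
  have hsp : s ^ (1 / ρ) * s ≤ s ^ p := by
    rw [← Real.rpow_add_one hs0.ne']
    exact Real.rpow_le_rpow_of_exponent_le hs hp
  have hs1 : s ≤ s ^ (1 / ρ) := Real.self_le_rpow_of_one_le hs hρinv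
  have hX : 1 ≤ s ^ p / ρ ^ 2 := by
    rw [le_div_iff₀ (by positivity)]
    nlinarith [Real.log_le_self hs0.le, pow_le_one₀ hρ0.le hρ1 (n := 2)]
  have hnorm1 : ‖cexp (I * θ) * ((s ^ (1 / ρ) * Real.log s / ρ ^ 2 : ℝ) : ℂ)‖ ≤ s ^ p / ρ ^ 2 := by
    rw [norm_mul, Complex.norm_exp_I_mul_ofReal, one_mul, Complex.norm_real,
      Real.norm_of_nonneg (by positivity)]
    gcongr
    nlinarith [Real.log_le_self hs0.le, Real.rpow_nonneg hs0.le (1 / ρ)]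
  have hnorm2 : ‖((Real.log s / ρ ^ 2 : ℝ) : ℂ)‖ ≤ s ^ p / ρ ^ 2 := by
    rw [Complex.norm_real, Real.norm_of_nonneg (by positivity)]
    gcongr
    nlinarith [Real.log_le_self hs0.le]
  have hnorm3 := norm_denom_deriv_div_denom_le hθ hρ0.le hρ1 hs0 hlam ht
  calc ‖integrandLogDeriv θ lam t₀ ρ s‖
      ≤ s ^ p / ρ ^ 2 + s ^ p / ρ ^ 2 + (3 * π / 2 + 2 * Real.log t₀) := by
        refine (norm_sub_le _ _).trans (add_le_add ((norm_sub_le _ _).trans ?_) hnorm3)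
        rw [norm_neg]
        exact add_le_add hnorm1 hnorm2
    _ ≤ 2 / ρ ^ 2 * (1 + π + Real.log t₀) * s ^ p := by
        have : 2 / ρ ^ 2 * (1 + π + Real.log t₀) * s ^ p =
            2 * (1 + π + Real.log t₀) * (s ^ p / ρ ^ 2) := by ring
        rw [this]
        nlinarith [Real.pi_pos]

lemma norm_integrand_mul_integrandLogDeriv_le {θ lam t₀ ρ s p : ℝ} (hθ : |θ| = 3 * π / 4)
    (hρ0 : 0 < ρ) (hρ1 : ρ ≤ 1) (hp : 1 / ρ + 1 ≤ p) (hs : 1 ≤ s) (hlam : 0 < lam)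
    (ht : 1 ≤ t₀) :
    ‖integrand θ lam t₀ ρ s * integrandLogDeriv θ lam t₀ ρ s‖ ≤
      4 / ρ ^ 2 * (1 + π + Real.log t₀) / (lam * t₀ ^ ρ) * weight (2 * p) s := by
  have hs0 : 0 < s := by linarith
  have hr : 0 < lam * t₀ ^ ρ := by positivity
  rw [norm_mul]
  refine (mul_le_mul (norm_integrand_le hθ hρ0 hρ1 hp hs hr)
    (norm_integrandLogDeriv_le hθ hρ0 hρ1 hp hs hlam ht) (norm_nonneg _)
    (mul_nonneg (by positivity) (weight_nonneg p hs0.le))).trans_eq ?_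
  rw [weight, weight, two_mul, Real.rpow_add hs0]
  ring

lemma integrableOn_weight {p : ℝ} (hp : -1 < p) : IntegrableOn (weight p) (Ioi 0) := by
  convert integrableOn_rpow_mul_exp_neg_mul_rpow hp one_pos one_half_pos using 2 with s
  rw [weight, Real.rpow_one]
  ring_nf

lemma setIntegral_weight_le {p : ℝ} (hp : -1 < p) :
    ∫ s in Ioi 1, weight p s ≤ 2 ^ (p + 1) * Real.Gamma (p + 1) := by
  have hGamma := Real.integral_rpow_mul_exp_neg_mul_Ioi (a := p + 1) (by linarith) one_half_pos
  norm_num only [add_sub_cancel_right] at hGamma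
  calc ∫ s in Ioi 1, weight p s ≤ ∫ s in Ioi 0, weight p s := by
        refine setIntegral_mono_set (integrableOn_weight hp) ?_
          (Ioi_subset_Ioi zero_le_one).eventuallyLE
        filter_upwards [self_mem_ae_restrict measurableSet_Ioi] with s hs
        exact weight_nonneg p (le_of_lt hs)
    _ = 2 ^ (p + 1) * Real.Gamma (p + 1) := by
        rw [← hGamma]
        refine setIntegral_congr_fun measurableSet_Ioi fun s _ => ?_
        rw [weight]
        ring_nf

lemma norm_setIntegral_le_of_norm_le_weight {f : ℝ → ℂ} {c p : ℝ} (hc : 0 ≤ c) (hp : -1 < p)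
    (hf : ∀ s, 1 < s → ‖f s‖ ≤ c * weight p s) :
    ‖∫ s in Ioi 1, f s‖ ≤ c * (2 ^ (p + 1) * Real.Gamma (p + 1)) := by
  have hint : IntegrableOn (fun s => c * weight p s) (Ioi 1) :=
    ((integrableOn_weight hp).mono_set (Ioi_subset_Ioi zero_le_one)).const_mul c
  refine (norm_integral_le_of_norm_le hint ?_).trans ?_
  · filter_upwards [self_mem_ae_restrict measurableSet_Ioi] with s hs using hf s hs
  · rw [integral_const_mul]
    exact mul_le_mul_of_nonneg_left (setIntegral_weight_le hp) hc

lemma measurable_integrand (θ lam t₀ ρ : ℝ) : Measurable (integrand θ lam t₀ ρ) := by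
  unfold integrand denom
  fun_prop

lemma denom_ne_zero {θ lam t₀ ρ s : ℝ} (hθ : |θ| = 3 * π / 4) (hρ0 : 0 ≤ ρ) (hρ1 : ρ ≤ 1)
    (hs : 0 < s) (hr : 0 ≤ lam * t₀ ^ ρ) : denom θ lam t₀ ρ s ≠ 0 := by
  have := (norm_denom_ge hθ hρ0 hρ1 hs.le hr).1
  rw [← norm_pos_iff]
  linarith

lemma integrableOn_integrand {θ lam t₀ ρ : ℝ} (hθ : |θ| = 3 * π / 4) (hρ0 : 0 < ρ) (hρ1 : ρ ≤ 1)
    (hr : 0 < lam * t₀ ^ ρ) : IntegrableOn (integrand θ lam t₀ ρ) (Ioi 1) := by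
  have hp : -1 < 1 / ρ + 1 := by linarith [one_div_pos.2 hρ0]
  refine Integrable.mono'
    (((integrableOn_weight hp).mono_set (Ioi_subset_Ioi zero_le_one)).const_mul
      (2 / (lam * t₀ ^ ρ))) (measurable_integrand θ lam t₀ ρ).aestronglyMeasurable ?_
  filter_upwards [self_mem_ae_restrict measurableSet_Ioi] with s hs
  exact norm_integrand_le hθ hρ0 hρ1 le_rfl (le_of_lt hs) hr

lemma hasDerivAt_integral_integrand {θ lam t₀ ρ : ℝ} (hθ : |θ| = 3 * π / 4) (hρ0 : 0 < ρ)
    (hρ1 : ρ < 1) (hlam : 0 < lam) (ht : 1 ≤ t₀) :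
    HasDerivAt (fun x => ∫ s in Ioi 1, integrand θ lam t₀ x s)
      (∫ s in Ioi 1, integrand θ lam t₀ ρ s * integrandLogDeriv θ lam t₀ ρ s) ρ := by
  have ht0 : 0 < t₀ := by linarith
  have hL : 0 ≤ Real.log t₀ := Real.log_nonneg ht
  set p := 2 / ρ + 1
  have hp : -1 < 2 * p := by linarith [div_pos two_pos hρ0]
  have hxp : ∀ x ∈ Ioo (ρ / 2) 1, 1 / x + 1 ≤ p := fun x hx => by
    have : 1 / x ≤ 2 / ρ := by
      rw [div_le_div_iff₀ (by linarith [hx.1]) hρ0]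
      linarith [hx.1]
    linarith
  have hr : ∀ x ∈ Ioo (ρ / 2) 1, lam ≤ lam * t₀ ^ x := fun x hx =>
    le_mul_of_one_le_right hlam.le (Real.one_le_rpow ht (by linarith [hx.1]))
  have hr0 : 0 < lam * t₀ ^ ρ := mul_pos hlam (Real.rpow_pos_of_pos ht0 ρ)
  refine (hasDerivAt_integral_of_dominated_loc_of_deriv_le
    (F := fun x s => integrand θ lam t₀ x s)
    (F' := fun x s => integrand θ lam t₀ x s * integrandLogDeriv θ lam t₀ x s)
    (bound := fun s => 4 / (ρ / 2) ^ 2 * (1 + π + Real.log t₀) / lam * weight (2 * p) s)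
    (Ioo_mem_nhds (half_lt_self hρ0) hρ1)
    (Filter.Eventually.of_forall fun x => (measurable_integrand θ lam t₀ x).aestronglyMeasurable)
    (integrableOn_integrand hθ hρ0 hρ1.le hr0)
    (by
      refine ((measurable_integrand θ lam t₀ ρ).mul ?_).aestronglyMeasurable
      unfold integrandLogDeriv denom
      fun_prop)
    ?_ ?_ ?_).2
  · filter_upwards [self_mem_ae_restrict measurableSet_Ioi] with s hs x hx
    have hx0 : 0 < x := by linarith [hx.1]
    refine (norm_integrand_mul_integrandLogDeriv_le hθ hx0 hx.2.le (hxp x hx) (le_of_lt hs) hlam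
      ht).trans ?_
    have := hr x hx
    have := hx.1
    have := weight_nonneg (2 * p) (zero_le_one.trans (le_of_lt hs))
    gcongr
  · exact ((integrableOn_weight hp).mono_set (Ioi_subset_Ioi zero_le_one)).const_mul _
  · filter_upwards [self_mem_ae_restrict measurableSet_Ioi] with s hs x hx
    have hx0 : 0 < x := by linarith [hx.1]
    exact hasDerivAt_integrand θ ht0 hx0.ne' (by linarith [mem_Ioi.1 hs])
      (denom_ne_zero hθ hx0.le hx.2.le (by linarith [mem_Ioi.1 hs]) (by positivity))

lemma hasDerivAt_rayContribution {θ lam t₀ ρ : ℝ} (hθ : |θ| = 3 * π / 4) (hρ0 : 0 < ρ)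
    (hρ1 : ρ < 1) (hlam : 0 < lam) (ht : 1 ≤ t₀) :
    HasDerivAt (rayContribution θ lam t₀)
      (prefactor θ lam t₀ ρ * (2 * I * θ - (1 / ρ + Real.log t₀)) *
          (∫ s in Ioi 1, integrand θ lam t₀ ρ s) +
        prefactor θ lam t₀ ρ *
          ∫ s in Ioi 1, integrand θ lam t₀ ρ s * integrandLogDeriv θ lam t₀ ρ s) ρ :=
  (hasDerivAt_prefactor θ hlam.ne' (by linarith) hρ0.ne').mul
    (hasDerivAt_integral_integrand hθ hρ0 hρ1 hlam ht)

lemma norm_prefactor (θ lam : ℝ) {t₀ ρ : ℝ} (ht : 0 ≤ t₀) (hρ : 0 < ρ) :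
    ‖prefactor θ lam t₀ ρ‖ = 1 / (2 * π * ρ * (lam ^ 2 * t₀ ^ (ρ + 1))) := by
  rw [prefactor, norm_div, norm_mul, Complex.norm_exp_I_mul_ofReal,
    show 2 * I * θ * ρ = I * ((2 * θ * ρ : ℝ) : ℂ) by push_cast; ring,
    Complex.norm_exp_I_mul_ofReal, norm_mul _ ((_ : ℝ) : ℂ), Complex.norm_real (_ * _),
    Real.norm_of_nonneg (by positivity)]
  simp only [norm_mul, Complex.norm_ofNat, Complex.norm_real, Complex.norm_I, Real.norm_eq_abs,
    abs_of_pos Real.pi_pos, abs_of_pos hρ]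
  ring

/-- `2 ^ (q + 1) * Γ (q + 1)` with `q = 2 (1/ρ₀ + 1)` bounds `∫_1^∞ s^q e^{-s/2} ds`
(`setIntegral_weight_le`); the factor `(7π + 6)/ρ₀³` comes from `mul_bracket_le_cube_mul_add`. -/
noncomputable def rayConst (ρ₀ : ℝ) : ℝ :=
  2 ^ (2 * (1 / ρ₀ + 1) + 1) * Real.Gamma (2 * (1 / ρ₀ + 1) + 1) * (7 * π + 6) / ρ₀ ^ 3 / (2 * π)

lemma rayConst_pos {ρ₀ : ℝ} (hρ₀ : 0 < ρ₀) : 0 < rayConst ρ₀ := by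
  unfold rayConst
  have := Real.pi_pos
  positivity

lemma mul_bracket_le_cube_mul_add {R M L : ℝ} (h1 : 1 ≤ R) (hRM : R ≤ M) (hL : 0 ≤ L) :
    R * (3 * π + 2 * R + 2 * L + 4 * R ^ 2 * (1 + π + L)) ≤ (7 * π + 6) * M ^ 3 * (R + L) := by
  have hπ := Real.pi_pos
  have hM1 : 1 ≤ M := h1.trans hRM
  have hR0 : 0 ≤ R := by linarith
  have hR3 : R ^ 3 ≤ M ^ 3 := by gcongr
  have hRM3 : R ≤ M ^ 3 := hRM.trans (le_self_pow₀ hM1 (by norm_num))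
  have hR2 : R ^ 2 ≤ M ^ 3 :=
    (pow_le_pow_left₀ hR0 hRM 2).trans (pow_le_pow_right₀ hM1 (by norm_num))
  have a1 : R * 1 ≤ R * M ^ 3 := mul_le_mul_of_nonneg_left (one_le_pow₀ hM1) hR0
  have a2 : R * R ≤ R * M ^ 3 := mul_le_mul_of_nonneg_left hRM3 hR0
  have a3 : R * R ^ 2 ≤ R * M ^ 3 := mul_le_mul_of_nonneg_left hR2 hR0
  have a4 : L * R ≤ L * M ^ 3 := mul_le_mul_of_nonneg_left hRM3 hL
  have a5 : L * R ^ 3 ≤ L * M ^ 3 := mul_le_mul_of_nonneg_left hR3 hL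
  nlinarith [mul_le_mul_of_nonneg_left a1 hπ.le, mul_le_mul_of_nonneg_left a3 hπ.le,
    mul_nonneg hπ.le (mul_nonneg hL (by positivity : (0 : ℝ) ≤ M ^ 3))]

lemma norm_deriv_rayContribution_le {θ ρ₀ lam t₀ ρ : ℝ} (hθ : |θ| = 3 * π / 4) (hρ₀ : 0 < ρ₀)
    (hρ : ρ ∈ Ico ρ₀ 1) (hlam : 0 < lam) (ht : 1 ≤ t₀) :
    ‖deriv (rayContribution θ lam t₀) ρ‖ ≤
      rayConst ρ₀ * (1 / ρ + Real.log t₀) / (lam ^ 3 * t₀ ^ (2 * ρ + 1)) := by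
  obtain ⟨hρ₀ρ, hρ1⟩ := hρ
  have hρ0 : 0 < ρ := hρ₀.trans_le hρ₀ρ
  have ht0 : 0 < t₀ := by linarith
  have hL : 0 ≤ Real.log t₀ := Real.log_nonneg ht
  have hr : 0 < lam * t₀ ^ ρ := by positivity
  set p := 1 / ρ₀ + 1
  set K := 2 ^ (2 * p + 1) * Real.Gamma (2 * p + 1)
  have hp : 1 / ρ + 1 ≤ p := by
    have : 1 / ρ ≤ 1 / ρ₀ := one_div_le_one_div_of_le hρ₀ hρ₀ρ
    linarith
  have hp1 : 1 ≤ p := by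
    have : 0 < 1 / ρ := by positivity
    linarith
  have hJ : ‖∫ s in Ioi 1, integrand θ lam t₀ ρ s‖ ≤ 2 / (lam * t₀ ^ ρ) * K :=
    norm_setIntegral_le_of_norm_le_weight (by positivity) (by linarith) fun s hs =>
      norm_integrand_le hθ hρ0 hρ1.le (by linarith) hs.le hr
  have hJ' : ‖∫ s in Ioi 1, integrand θ lam t₀ ρ s * integrandLogDeriv θ lam t₀ ρ s‖ ≤
      4 / ρ ^ 2 * (1 + π + Real.log t₀) / (lam * t₀ ^ ρ) * K :=
    norm_setIntegral_le_of_norm_le_weight (by positivity) (by linarith) fun s hs =>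
      norm_integrand_mul_integrandLogDeriv_le hθ hρ0 hρ1.le hp hs.le hlam ht
  have hD : ‖2 * I * θ - (1 / ρ + Real.log t₀)‖ ≤ 3 * π / 2 + (1 / ρ + Real.log t₀) := by
    refine (norm_sub_le _ _).trans (add_le_add (le_of_eq ?_) ?_)
    · simp only [Complex.norm_mul, Complex.norm_ofNat, Complex.norm_I, mul_one,
        Complex.norm_real, Real.norm_eq_abs, hθ]
      ring
    · rw [← Complex.ofReal_one, ← Complex.ofReal_div, ← Complex.ofReal_add, Complex.norm_real,
        Real.norm_of_nonneg (by positivity)]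
  have ht2 : t₀ ^ (2 * ρ + 1) = t₀ ^ (ρ + 1) * t₀ ^ ρ := by
    rw [← Real.rpow_add ht0]
    ring_nf
  have hpoly := mul_bracket_le_cube_mul_add (one_le_one_div hρ0 hρ1.le)
    (one_div_le_one_div_of_le hρ₀ hρ₀ρ) hL
  rw [(hasDerivAt_rayContribution hθ hρ0 hρ1 hlam ht).deriv]
  calc _ ≤ ‖prefactor θ lam t₀ ρ‖ * (3 * π / 2 + (1 / ρ + Real.log t₀)) *
            (2 / (lam * t₀ ^ ρ) * K) +
          ‖prefactor θ lam t₀ ρ‖ * (4 / ρ ^ 2 * (1 + π + Real.log t₀) / (lam * t₀ ^ ρ) * K) := by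
        refine (norm_add_le _ _).trans ?_
        rw [norm_mul, norm_mul, norm_mul]
        gcongr
    _ = K / (2 * π) * (1 / ρ * (3 * π + 2 * (1 / ρ) + 2 * Real.log t₀ +
          4 * (1 / ρ) ^ 2 * (1 + π + Real.log t₀))) / (lam ^ 3 * t₀ ^ (2 * ρ + 1)) := by
        rw [norm_prefactor θ lam ht0.le hρ0, ht2]
        field_simp
        ring
    _ ≤ K / (2 * π) * ((7 * π + 6) * (1 / ρ₀) ^ 3 * (1 / ρ + Real.log t₀)) /
          (lam ^ 3 * t₀ ^ (2 * ρ + 1)) := by gcongr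
    _ = _ := by
        unfold rayConst
        ring

end HankelRay

/-- For every `ρ₀ ∈ (0,1)` and `λ₁ > 0` there exist `C > 0` and `T₀ > 1` such that for all
`t₀ ≥ T₀`, `λ ≥ λ₁` and `ρ ∈ [ρ₀, 1)`, both `f₂₊` and `f₂₋` are differentiable at `ρ` and
`|f₂±'(ρ)| ≤ C (1/ρ + ln t₀) / (λ³ t₀^{2ρ+1})`. -/
theorem statement13 (ρ₀ : ℝ) (hρ₀ : ρ₀ ∈ Set.Ioo (0 : ℝ) 1) (lam₁ : ℝ) (hlam₁ : 0 < lam₁) :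
    ∃ C : ℝ, 0 < C ∧ ∃ T₀ : ℝ, 1 < T₀ ∧
      ∀ t₀ : ℝ, T₀ ≤ t₀ → ∀ lam : ℝ, lam₁ ≤ lam → ∀ ρ ∈ Set.Ico ρ₀ 1,
        DifferentiableAt ℝ (f2plus lam t₀) ρ ∧
        DifferentiableAt ℝ (f2minus lam t₀) ρ ∧
        ‖deriv (f2plus lam t₀) ρ‖ ≤ C * (1 / ρ + Real.log t₀) / (lam ^ 3 * t₀ ^ (2 * ρ + 1)) ∧
        ‖deriv (f2minus lam t₀) ρ‖ ≤ C * (1 / ρ + Real.log t₀) / (lam ^ 3 * t₀ ^ (2 * ρ + 1)) := by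
  refine ⟨HankelRay.rayConst ρ₀, HankelRay.rayConst_pos hρ₀.1, 2, one_lt_two,
    fun t₀ ht lam hlam ρ hρ => ?_⟩
  have hlam0 : 0 < lam := hlam₁.trans_le hlam
  have ht1 : 1 ≤ t₀ := one_le_two.trans ht
  have hρ0 : 0 < ρ := hρ₀.1.trans_le hρ.1
  have hplus : |3 * π / 4| = 3 * π / 4 := abs_of_pos (by positivity)
  have hminus : |-(3 * π / 4)| = 3 * π / 4 := by rw [abs_neg, hplus]
  rw [HankelRay.f2plus_eq_rayContribution, HankelRay.f2minus_eq_rayContribution]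
  exact ⟨(HankelRay.hasDerivAt_rayContribution hplus hρ0 hρ.2 hlam0 ht1).differentiableAt,
    (HankelRay.hasDerivAt_rayContribution hminus hρ0 hρ.2 hlam0 ht1).differentiableAt,
    HankelRay.norm_deriv_rayContribution_le hplus hρ₀.1 hρ hlam0 ht1,
    HankelRay.norm_deriv_rayContribution_le hminus hρ₀.1 hρ hlam0 ht1⟩
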